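/- arXiv:2505.14767 — 3 statements merged into one kernel-verified Lean document; each statement's English description precedes it below -/
import Mathlib

section
/- Let G be a group and I a nonempty finite type of labels ('anyons') equipped with: a surjective grading map γ : I → G; a duality map ι : I → I satisfying γ(ι(a)) = γ(a)⁻¹ for all a; fusion multiplicities N : I → I → I → ℕ; and quantum dimensions d : I → ℝ with d(a) > 0 for all a. Assume: (i) d(ι(a)) = d(a) for all a; (ii) d(a)·d(b) = Σ_{x∈I} N(a,b,x)·d(x) for all a,b; (iii) Frobenius reciprocity N(a, ι(b), x) = N(x, b, a) for all a,b,x; (iv) the grading is compatible with fusion: N(a,b,x) ≠ 0 implies γ(x) = γ(a)·γ(b). Then for all g, h ∈ G, Σ_{a : γ(a)=g} d(a)² = Σ_{a : γ(a)=h} d(a)²; in particular every graded component has the same total quantum dimension squared as the identity component. -/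
/-!
Fix an anyon `b` and multiply the total dimension of the component `g` by `d b`. Expanding
`d a * d b` by the fusion rules gives a double sum of `N a b x * d a * d x` over `γ a = g`;
since `N a b x ≠ 0` forces `γ x = γ a * γ b`, the same double sum is indexed by
`γ x = g * γ b`, and Frobenius reciprocity together with `d (ι b) = d b` resums it to the
total dimension of the component `g * γ b` times `d b`. Cancelling `d b > 0` and choosing `b`
with `γ b = g⁻¹ * h` compares any two components.
-/

open Finset

theorem Finset.sum_filter_sum_comm_of_support_graded {I G M : Type*} [Fintype I] [Group G]
    [DecidableEq G] [AddCommMonoid M] (γ : I → G) (g c : G) (f : I → I → M)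
    (hf : ∀ a x, f a x ≠ 0 → γ x = γ a * c) :
    ∑ a ∈ univ.filter (γ · = g), ∑ x, f a x
      = ∑ x ∈ univ.filter (γ · = g * c), ∑ a, f a x := by
  have hcond : ∀ a x, (if γ a = g then f a x else 0) = if γ x = g * c then f a x else 0 := by
    intro a x
    by_cases hfax : f a x = 0
    · simp [hfax]
    · simp only [hf a x hfax, mul_left_inj]
  simp only [sum_filter, ite_sum_zero]
  rw [sum_comm]
  simp only [hcond]

section Fusion

variable {I : Type*} [Fintype I] (N : I → I → I → ℕ) (d : I → ℝ)

theorem mul_eq_sum_fusion_of_frobenius (ι : I → I) (hdual : ∀ a, d (ι a) = d a)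
    (hfusion : ∀ a b, d a * d b = ∑ x, (N a b x : ℝ) * d x)
    (hfrob : ∀ a b x, N a (ι b) x = N x b a) (x b : I) :
    d x * d b = ∑ a, (N a b x : ℝ) * d a := by
  simp only [← hdual b, hfusion x (ι b), hfrob]

/-- The paper's `𝒟_g²`. -/
def componentDimSq {G : Type*} [DecidableEq G] (γ : I → G) (g : G) : ℝ :=
  ∑ a ∈ univ.filter (γ · = g), d a ^ 2

theorem componentDimSq_mul_eq_componentDimSq_mul_grade_mul {G : Type*} [Group G]
    [DecidableEq G] (γ : I → G) (ι : I → I) (hdual : ∀ a, d (ι a) = d a)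
    (hfusion : ∀ a b, d a * d b = ∑ x, (N a b x : ℝ) * d x)
    (hfrob : ∀ a b x, N a (ι b) x = N x b a)
    (hgrade : ∀ a b x, N a b x ≠ 0 → γ x = γ a * γ b) (g : G) (b : I) :
    componentDimSq d γ g * d b = componentDimSq d γ (g * γ b) * d b := by
  have hsupp : ∀ a x, (N a b x : ℝ) * (d a * d x) ≠ 0 → γ x = γ a * γ b := fun a x h ↦
    hgrade a b x fun hN ↦ h (by simp [hN])
  have hleft : ∀ a, d a ^ 2 * d b = ∑ x, (N a b x : ℝ) * (d a * d x) := fun a ↦ by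
    rw [sq, mul_assoc, hfusion, mul_sum]
    exact sum_congr rfl fun x _ ↦ by ring
  have hright : ∀ x, d x ^ 2 * d b = ∑ a, (N a b x : ℝ) * (d a * d x) := fun x ↦ by
    rw [sq, mul_assoc, mul_eq_sum_fusion_of_frobenius N d ι hdual hfusion hfrob, mul_sum]
    exact sum_congr rfl fun a _ ↦ by ring
  rw [componentDimSq, componentDimSq, sum_mul, sum_mul, sum_congr rfl fun a _ ↦ hleft a,
    sum_congr rfl fun x _ ↦ hright x]
  exact sum_filter_sum_comm_of_support_graded γ g (γ b) _ hsupp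

end Fusion

theorem graded_components_equal_quantum_dimension_general
    {G : Type*} [Group G] [DecidableEq G]
    {I : Type*} [Fintype I]
    (γ : I → G) (hγ : Function.Surjective γ)
    (ι : I → I)
    (N : I → I → I → ℕ)
    (d : I → ℝ) (hd : ∀ a, 0 < d a)
    (hdual : ∀ a, d (ι a) = d a)
    (hfusion : ∀ a b, d a * d b = ∑ x, (N a b x : ℝ) * d x)
    (hfrob : ∀ a b x, N a (ι b) x = N x b a)
    (hgrade : ∀ a b x, N a b x ≠ 0 → γ x = γ a * γ b) :
    ∀ g h : G,
      ∑ a ∈ Finset.univ.filter (fun a => γ a = g), d a ^ 2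
        = ∑ a ∈ Finset.univ.filter (fun a => γ a = h), d a ^ 2 := by
  intro g h
  obtain ⟨b, hb⟩ := hγ (g⁻¹ * h)
  have hcomp := componentDimSq_mul_eq_componentDimSq_mul_grade_mul N d γ ι hdual hfusion hfrob
    hgrade g b
  rw [hb, mul_inv_cancel_left] at hcomp
  exact mul_right_cancel₀ (hd b).ne' hcomp

/-- G-graded fusion: in a theory with G-graded fusion rules, the total quantum
dimension squared of each graded component is the same. -/
theorem graded_components_equal_quantum_dimension
    {G : Type*} [Group G] [DecidableEq G]
    {I : Type*} [Fintype I] [Nonempty I]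
    (γ : I → G) (hγ : Function.Surjective γ)
    (ι : I → I) (hι : ∀ a, γ (ι a) = (γ a)⁻¹)
    (N : I → I → I → ℕ)
    (d : I → ℝ) (hd : ∀ a, 0 < d a)
    (hdual : ∀ a, d (ι a) = d a)
    (hfusion : ∀ a b, d a * d b = ∑ x, (N a b x : ℝ) * d x)
    (hfrob : ∀ a b x, N a (ι b) x = N x b a)
    (hgrade : ∀ a b x, N a b x ≠ 0 → γ x = γ a * γ b) :
    ∀ g h : G,
      ∑ a ∈ Finset.univ.filter (fun a => γ a = g), d a ^ 2
        = ∑ a ∈ Finset.univ.filter (fun a => γ a = h), d a ^ 2 :=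
  graded_components_equal_quantum_dimension_general γ hγ ι N d hd hdual hfusion hfrob hgrade
end

section
/- Let A be a finite additive abelian group, B : A → A → ℚ/ℤ additive in each argument and symmetric, and c ∈ A an element with c ≠ 0 and 2c = 0. Assume the radical {a ∈ A : B(a,x) = 0 for all x ∈ A} is exactly the two-element set {0, c}. Then for every additive group homomorphism φ : A → ℚ/ℤ with φ(c) = 0 there exists w ∈ A with φ(x) = B(w,x) for all x ∈ A, and the set of all such w is exactly {w, w + c}, i.e., w is unique up to addition of c. -/
/-!
The pairing `B` gives a homomorphism `A → Hom(A, ℚ/ℤ)` whose kernel is the radical `R`.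
By symmetry its image consists of characters vanishing on `R`, i.e. characters of `A ⧸ R`.
There are at most `|A ⧸ R|` of these (they embed into the complex characters of `A ⧸ R`),
which is exactly the size of the image, so every character vanishing on `R` — in particular
on `{0, c}` — is some `B w`, and `w` is determined up to `R`.
-/

open Function

namespace AddCircle

noncomputable def ratToReal : AddCircle (1 : ℚ) →+ AddCircle (1 : ℝ) :=
  QuotientAddGroup.map _ _ (Rat.castHom ℝ).toAddMonoidHom <| by
    rw [AddSubgroup.zmultiples_le]
    simp [AddSubgroup.mem_comap]

theorem ratToReal_injective : Injective ratToReal := by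
  refine (injective_iff_map_eq_zero _).2 fun x hx => ?_
  induction x using QuotientAddGroup.induction_on with | H q =>
  obtain ⟨n, hn⟩ := (coe_eq_zero_iff _).1 hx
  have hn' : ((n : ℚ) : ℝ) = q := by simpa using hn
  exact (coe_eq_zero_iff _).2 ⟨n, by simpa using Rat.cast_injective hn'⟩

noncomputable def ratToComplex : AddChar (AddCircle (1 : ℚ)) ℂ :=
  Circle.coeHom.compAddChar (toCircle_addChar.compAddMonoidHom ratToReal)

theorem ratToComplex_injective : Injective ratToComplex :=
  Subtype.coe_injective.comp ((injective_toCircle one_ne_zero).comp ratToReal_injective)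

end AddCircle

namespace CharacterModule

variable {A : Type*} [AddCommGroup A]

theorem injective_compAddMonoidHom_ratToComplex :
    Injective fun φ : CharacterModule A => AddCircle.ratToComplex.compAddMonoidHom φ :=
  AddChar.compAddMonoidHom_injective_right _ AddCircle.ratToComplex_injective

instance [Finite A] : Finite (CharacterModule A) :=
  Finite.of_injective _ injective_compAddMonoidHom_ratToComplex

theorem card_le [Finite A] : Nat.card (CharacterModule A) ≤ Nat.card A := by
  have := Fintype.ofFinite A
  calc Nat.card (CharacterModule A) ≤ Nat.card (AddChar A ℂ) :=
        Nat.card_le_card_of_injective _ injective_compAddMonoidHom_ratToComplex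
    _ ≤ Nat.card A := by
        simpa only [Nat.card_eq_fintype_card] using AddChar.card_addChar_le A ℂ

end CharacterModule

theorem AddMonoidHom.mem_range_iff_ker_le_ker_of_symm {A : Type*} [AddCommGroup A] [Finite A]
    {B : A →+ A →+ AddCircle (1 : ℚ)} (hB : ∀ a b, B a b = B b a)
    {φ : A →+ AddCircle (1 : ℚ)} :
    φ ∈ B.range ↔ B.ker ≤ φ.ker := by
  have ker_le_of_mem : ∀ ψ ∈ B.range, B.ker ≤ ψ.ker := by
    rintro _ ⟨w, rfl⟩ k hk
    exact (hB w k).trans (DFunLike.congr_fun hk w)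
  refine ⟨ker_le_of_mem φ, fun hφ => ?_⟩
  set K := B.ker
  let D : CharacterModule (A ⧸ K) → A →+ AddCircle (1 : ℚ) :=
    fun ψ => ψ.comp (QuotientAddGroup.mk' K)
  have hD : Injective D := fun ψ χ h => QuotientAddGroup.addMonoidHom_ext K h
  have mem_range_D : ∀ ψ : A →+ AddCircle (1 : ℚ), K ≤ ψ.ker → ψ ∈ Set.range D :=
    fun ψ h => ⟨QuotientAddGroup.lift K ψ h, rfl⟩
  have hsub : (B.range : Set (A →+ AddCircle (1 : ℚ))) ⊆ Set.range D :=
    fun ψ hψ => mem_range_D ψ (ker_le_of_mem ψ hψ)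
  have hcard : Nat.card (Set.range D) ≤ Nat.card B.range :=
    calc Nat.card (Set.range D) = Nat.card (CharacterModule (A ⧸ K)) :=
          Nat.card_range_of_injective hD
      _ ≤ Nat.card (A ⧸ K) := CharacterModule.card_le
      _ = Nat.card B.range := Nat.card_congr (QuotientAddGroup.quotientKerEquivRange B).toEquiv
  have heq : (B.range : Set (A →+ AddCircle (1 : ℚ))) = Set.range D :=
    Set.eq_of_subset_of_ncard_le hsub (by rwa [← Nat.card_coe_set_eq, ← Nat.card_coe_set_eq])
      (Set.finite_range D)
  rw [← SetLike.mem_coe, heq]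
  exact mem_range_D φ hφ

theorem exists_vison_unique_up_to_fermion_general
    {A : Type*} [AddCommGroup A] [Fintype A]
    (B : A → A → AddCircle (1 : ℚ))
    (hBl : ∀ a b x, B (a + b) x = B a x + B b x)
    (hBr : ∀ a x y, B a (x + y) = B a x + B a y)
    (hsymm : ∀ a b, B a b = B b a)
    (c : A)
    (hrad : ∀ a, (∀ x, B a x = 0) ↔ (a = 0 ∨ a = c))
    (φ : A →+ AddCircle (1 : ℚ)) (hφc : φ c = 0) :
    ∃ w : A, (∀ x, φ x = B w x) ∧
      (∀ w' : A, (∀ x, φ x = B w' x) ↔ (w' = w ∨ w' = w + c)) := by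
  let β : A →+ A →+ AddCircle (1 : ℚ) :=
    AddMonoidHom.mk' (fun a => AddMonoidHom.mk' (B a) (hBr a)) fun a b => AddMonoidHom.ext (hBl a b)
  have mem_ker : ∀ a, a ∈ β.ker ↔ a = 0 ∨ a = c :=
    fun a => AddMonoidHom.ext_iff.trans (hrad a)
  have represents : ∀ w, (∀ x, φ x = B w x) ↔ β w = φ :=
    fun w => by rw [AddMonoidHom.ext_iff]; exact forall_congr' fun _ => eq_comm
  obtain ⟨w, hw⟩ := (AddMonoidHom.mem_range_iff_ker_le_ker_of_symm (B := β) (φ := φ) hsymm).2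
    fun k hk => by rcases (mem_ker k).1 hk with rfl | rfl; exacts [φ.map_zero, hφc]
  refine ⟨w, (represents w).2 hw, fun w' => ?_⟩
  rw [represents, ← hw, AddMonoidHom.eq_iff, mem_ker, neg_add_eq_sub, sub_eq_zero,
    sub_eq_iff_eq_add']

/-- Super-modular version: if the radical of the symmetric biadditive pairing is
exactly {0, c} with c of order two, then any homomorphism to ℚ/ℤ vanishing on c
is represented by braiding with an element, unique up to addition of c. -/
theorem exists_vison_unique_up_to_fermion
    {A : Type*} [AddCommGroup A] [Fintype A]
    (B : A → A → AddCircle (1 : ℚ))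
    (hBl : ∀ a b x, B (a + b) x = B a x + B b x)
    (hBr : ∀ a x y, B a (x + y) = B a x + B a y)
    (hsymm : ∀ a b, B a b = B b a)
    (c : A) (hc : c ≠ 0) (hc2 : 2 • c = 0)
    (hrad : ∀ a, (∀ x, B a x = 0) ↔ (a = 0 ∨ a = c))
    (φ : A →+ AddCircle (1 : ℚ)) (hφc : φ c = 0) :
    ∃ w : A, (∀ x, φ x = B w x) ∧
      (∀ w' : A, (∀ x, φ x = B w' x) ↔ (w' = w ∨ w' = w + c)) :=
  exists_vison_unique_up_to_fermion_general B hBl hBr hsymm c hrad φ hφc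
end

section
/- Let s be a positive integer and r, u, m, m̂ integers with m·m̂ ≡ 1 (mod s) and rs even. Then (m²r)·(m̂ u)²/s − r·u²/s is an even integer. Hence the relabeling (r,u) ↦ (m²r, m̂ u) induced by changing the generator of the ℤ_s symmetry lines preserves the Hall conductivity σ_H = r u²/s modulo 2. -/
/-! Writing `m * m̂ = 1 + s t`, the difference of the two conductivities is
`r ((m m̂)² - 1) u² / s = r t (s t + 2) u²`, and `r s t² + 2 r t` is even because `r s` is. -/

theorem Int.two_mul_dvd_mul_sq_sub_one {s r x : ℤ} (hx : s ∣ x - 1) (hrs : 2 ∣ r * s) :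
    2 * s ∣ r * (x ^ 2 - 1) := by
  obtain ⟨t, ht⟩ := hx
  obtain ⟨c, hc⟩ := hrs
  exact ⟨c * t ^ 2 + r * t, by linear_combination (r * (x + 1 + s * t)) * ht + s * t ^ 2 * hc⟩

theorem Int.exists_cast_div_eq_two_mul {x s : ℤ} (h : 2 * s ∣ x) :
    ∃ k : ℤ, (x : ℚ) / s = 2 * k := by
  obtain ⟨k, rfl⟩ := h
  rcases eq_or_ne s 0 with rfl | hs
  · exact ⟨0, by simp⟩
  · refine ⟨k, ?_⟩
    push_cast
    field_simp

theorem relabeling_preserves_hall_conductivity_general (s : ℤ)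
    (r u m mhat : ℤ) (hinv : s ∣ m * mhat - 1) (hrs : 2 ∣ r * s) :
    ∃ k : ℤ,
      ((m^2 * r : ℤ) : ℚ) * ((mhat * u : ℤ) : ℚ)^2 / (s : ℚ)
        - (r : ℚ) * (u : ℚ)^2 / (s : ℚ) = 2 * (k : ℚ) := by
  have hdiff : 2 * s ∣ m ^ 2 * r * (mhat * u) ^ 2 - r * u ^ 2 := by
    have h := dvd_mul_of_dvd_left (Int.two_mul_dvd_mul_sq_sub_one hinv hrs) (u ^ 2)
    rwa [show r * ((m * mhat) ^ 2 - 1) * u ^ 2 = m ^ 2 * r * (mhat * u) ^ 2 - r * u ^ 2 by ring] at h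
  obtain ⟨k, hk⟩ := Int.exists_cast_div_eq_two_mul hdiff
  refine ⟨k, ?_⟩
  rw [← hk]
  push_cast
  ring

/-- The relabeling (r, u) ↦ (m²r, m̂u) induced by changing the generator of the
ℤ_s symmetry lines (with rs even) preserves the Hall conductivity
σ_H = r u²/s modulo 2. -/
theorem relabeling_preserves_hall_conductivity (s : ℤ) (hs : 0 < s)
    (r u m mhat : ℤ) (hinv : s ∣ m * mhat - 1) (hrs : 2 ∣ r * s) :
    ∃ k : ℤ,
      ((m^2 * r : ℤ) : ℚ) * ((mhat * u : ℤ) : ℚ)^2 / (s : ℚ)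
        - (r : ℚ) * (u : ℚ)^2 / (s : ℚ) = 2 * (k : ℚ) :=
  relabeling_preserves_hall_conductivity_general s r u m mhat hinv hrs
end
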